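/- arXiv:1005.3225 — 4 statements merged into one kernel-verified Lean document; each statement's English description precedes it below -/
import Mathlib

section
/- Under subset pivotality, the maxT procedure has strong control of the family-wise error rate: for every threshold u ∈ ℝ, P(∃ k ∈ M_0 : T_k > u) ≤ P₀(max_{k∈M} T⁰_k > u). -/
open MeasureTheory ProbabilityTheory

/-! Subset pivotality says the null subfamilies of `T` and `T₀` are identically distributed, so
they exceed `u` somewhere with the same probability; and the null subfamily of `T₀` exceeding `u`
forces the whole family, hence its maximum, to exceed `u`. -/

theorem measurableSet_exists_lt_apply {α : Type*} [Countable α] (u : ℝ) :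
    MeasurableSet {x : α → ℝ | ∃ k, u < x k} := by
  simpa only [Set.ofPred_exists] using
    MeasurableSet.iUnion fun k => measurableSet_lt measurable_const (measurable_pi_apply k)

theorem ProbabilityTheory.IdentDistrib.measure_exists_lt_eq {α Ω Ω₀ : Type*} [Countable α]
    [MeasurableSpace Ω] [MeasurableSpace Ω₀] {μ : Measure Ω} {ν : Measure Ω₀}
    {X : α → Ω → ℝ} {Y : α → Ω₀ → ℝ}
    (h : IdentDistrib (fun ω k => X k ω) (fun ω k => Y k ω) μ ν) (u : ℝ) :
    μ {ω | ∃ k, u < X k ω} = ν {ω | ∃ k, u < Y k ω} :=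
  h.measure_mem_eq (measurableSet_exists_lt_apply u)

theorem maxT_strong_FWER_control_general
    {Ω Ω₀ : Type*} [MeasurableSpace Ω] [MeasurableSpace Ω₀]
    (P : Measure Ω)
    (P₀ : Measure Ω₀)
    {ι : Type*} (M₀ : Finset ι)
    (T : ι → Ω → ℝ) (T₀ : ι → Ω₀ → ℝ)
    (hT : ∀ k, Measurable (T k)) (hT₀ : ∀ k, Measurable (T₀ k))
    (hpivot : Measure.map (fun ω (k : M₀) => T k ω) P
      = Measure.map (fun ω (k : M₀) => T₀ k ω) P₀) :
    ∀ u : ℝ, P {ω | ∃ k ∈ M₀, T k ω > u} ≤ P₀ {ω | ∃ k : ι, T₀ k ω > u} := by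
  intro u
  have hnull : IdentDistrib (fun ω (k : M₀) => T k ω) (fun ω (k : M₀) => T₀ k ω) P P₀ :=
    ⟨(measurable_pi_lambda _ fun k : M₀ => hT k).aemeasurable,
      (measurable_pi_lambda _ fun k : M₀ => hT₀ k).aemeasurable, hpivot⟩
  calc P {ω | ∃ k ∈ M₀, T k ω > u}
      = P {ω | ∃ k : M₀, u < T k ω} := by simp only [gt_iff_lt, Subtype.exists, exists_prop]
    _ = P₀ {ω | ∃ k : M₀, u < T₀ k ω} := hnull.measure_exists_lt_eq u
    _ ≤ P₀ {ω | ∃ k : ι, T₀ k ω > u} := measure_mono fun _ ⟨k, hk⟩ => ⟨k, hk⟩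

/-- Strong control of the maxT procedure under subset pivotality.  Let
`(T k)_{k ∈ M}` be the test statistics under the true distribution `P`, with
`M₀` the set of true null hypotheses, and `(T₀ k)_{k ∈ M}` statistics
distributed according to the global null (under `P₀`).  Subset pivotality
states that the joint law of `(T k)_{k ∈ M₀}` under `P` equals that of
`(T₀ k)_{k ∈ M₀}` under `P₀`.  Then for every threshold `u`,
`P(∃ k ∈ M₀, T k > u) ≤ P₀(max_{k ∈ M} T₀ k > u)`. -/
theorem maxT_strong_FWER_control
    {Ω Ω₀ : Type*} [MeasurableSpace Ω] [MeasurableSpace Ω₀]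
    (P : Measure Ω) [IsProbabilityMeasure P]
    (P₀ : Measure Ω₀) [IsProbabilityMeasure P₀]
    {ι : Type*} [Fintype ι] (M₀ : Finset ι)
    (T : ι → Ω → ℝ) (T₀ : ι → Ω₀ → ℝ)
    (hT : ∀ k, Measurable (T k)) (hT₀ : ∀ k, Measurable (T₀ k))
    (hpivot : Measure.map (fun ω (k : M₀) => T k ω) P
      = Measure.map (fun ω (k : M₀) => T₀ k ω) P₀) :
    ∀ u : ℝ, P {ω | ∃ k ∈ M₀, T k ω > u} ≤ P₀ {ω | ∃ k : ι, T₀ k ω > u} :=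
  maxT_strong_FWER_control_general P P₀ M₀ T T₀ hT hT₀ hpivot
end

section
/- Under subset pivotality, the maximum-cluster-size test has strong control of the family-wise error rate: for every threshold u ∈ ℝ and every critical size N, the probability of falsely detecting a cluster satisfies P(∃ a cluster C of (T_k) at threshold u with C ⊆ M_0 and |C| > N) ≤ P₀(∃ a cluster C of (T⁰_k) at threshold u with |C| > N). -/
/-!
Clusters grow with the excursion set: a cluster of `A` contained in a set `B` lies in a
cluster of `B`. Hence a large cluster of null voxels yields a large cluster of the
excursion set of `(T k)_{k ∈ M₀}`, and a large cluster of the excursion set of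
`(T₀ k)_{k ∈ M₀}` yields one of the full excursion set of `T₀`. The middle event depends
only on the statistics indexed by `M₀`, so subset pivotality gives it the same
probability under `P` and `P₀`.
-/

open MeasureTheory

/-- `C` is a cluster of the excursion set `A` in the graph `G`: `C` is the
vertex set of a connected component of the subgraph of `G` induced by `A`. -/
def IsCluster {ι : Type*} (G : SimpleGraph ι) (A : Set ι) (C : Set ι) : Prop :=
  ∃ v : A, C = {w : ι | ∃ hw : w ∈ A, (G.induce A).Reachable v ⟨w, hw⟩}

namespace IsCluster

variable {ι : Type*} {G : SimpleGraph ι} {A B C : Set ι}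

theorem subset (h : IsCluster G A C) : C ⊆ A := by
  obtain ⟨v, rfl⟩ := h
  exact fun _ ⟨hw, _⟩ ↦ hw

theorem exists_superset_of_subset (h : IsCluster G A C) (hCB : C ⊆ B) :
    ∃ C', IsCluster G B C' ∧ C ⊆ C' := by
  obtain ⟨v, rfl⟩ := h
  have hvB : (v : ι) ∈ B := hCB ⟨v.2, .rfl⟩
  refine ⟨_, ⟨⟨v, hvB⟩, rfl⟩, fun w ⟨hw, ⟨p⟩⟩ ↦ ⟨hCB ⟨hw, ⟨p⟩⟩, ?_⟩⟩
  -- Every vertex on a walk of `G[A]` from `v` lies in the cluster of `v`, hence in `B`.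
  have hsupp : ∀ x ∈ (p.map (SimpleGraph.Embedding.induce A).toHom).support, x ∈ B := by
    intro x hx
    rw [SimpleGraph.Walk.support_map, List.mem_map] at hx
    obtain ⟨y, hy, rfl⟩ := hx
    obtain ⟨q, -, -⟩ := SimpleGraph.Walk.mem_support_iff_exists_append.1 hy
    exact hCB ⟨y.2, ⟨q⟩⟩
  exact ⟨(p.map (SimpleGraph.Embedding.induce A).toHom).induce B hsupp⟩

theorem exists_ncard_lt_of_subset [Finite ι] {N : ℕ} (h : IsCluster G A C) (hCB : C ⊆ B)
    (hN : N < C.ncard) : ∃ C', IsCluster G B C' ∧ N < C'.ncard := by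
  obtain ⟨C', hC', hCC'⟩ := h.exists_superset_of_subset hCB
  exact ⟨C', hC', hN.trans_le (Set.ncard_le_ncard hCC')⟩

end IsCluster

theorem measurableSet_setOf_excursionSet {κ : Type*} [Finite κ] (p : Set κ → Prop) (u : ℝ) :
    MeasurableSet {f : κ → ℝ | p {k | u < f k}} := by
  have hexc : Measurable fun f : κ → ℝ ↦ {k | u < f k} := measurable_set_iff.2 fun k ↦
    measurableSet_setOfPred.1 (measurableSet_lt measurable_const (measurable_pi_apply k))
  exact hexc (MeasurableSet.of_discrete (s := {A | p A}))

theorem maxClusterSize_strong_FWER_control_general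
    {Ω Ω₀ : Type*} [MeasurableSpace Ω] [MeasurableSpace Ω₀]
    (P : Measure Ω)
    (P₀ : Measure Ω₀)
    {ι : Type*} [Fintype ι] (G : SimpleGraph ι) (M₀ : Finset ι)
    (T : ι → Ω → ℝ) (T₀ : ι → Ω₀ → ℝ)
    (hT : ∀ k, Measurable (T k)) (hT₀ : ∀ k, Measurable (T₀ k))
    (hpivot : Measure.map (fun ω (k : M₀) => T k ω) P
      = Measure.map (fun ω (k : M₀) => T₀ k ω) P₀) :
    ∀ (u : ℝ) (N : ℕ),
      P {ω | ∃ C : Set ι, IsCluster G {k | T k ω > u} C ∧ C ⊆ ↑M₀ ∧ N < C.ncard}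
        ≤ P₀ {ω | ∃ C : Set ι, IsCluster G {k | T₀ k ω > u} C ∧ N < C.ncard} := by
  intro u N
  set HasLargeCluster : Set ι → Prop := fun A ↦ ∃ C, IsCluster G A C ∧ N < C.ncard
  set S : Set (M₀ → ℝ) := {f | HasLargeCluster (Subtype.val '' {k | u < f k})}
  have hS : MeasurableSet S :=
    measurableSet_setOf_excursionSet (fun A ↦ HasLargeCluster (Subtype.val '' A)) u
  have hT_M₀ : Measurable fun ω (k : M₀) ↦ T k ω := measurable_pi_lambda _ fun k ↦ hT k
  have hT₀_M₀ : Measurable fun ω (k : M₀) ↦ T₀ k ω := measurable_pi_lambda _ fun k ↦ hT₀ k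
  calc P {ω | ∃ C : Set ι, IsCluster G {k | T k ω > u} C ∧ C ⊆ ↑M₀ ∧ N < C.ncard}
      ≤ P ((fun ω (k : M₀) ↦ T k ω) ⁻¹' S) := by
        refine measure_mono fun ω ⟨C, hC, hCM₀, hN⟩ ↦ ?_
        exact hC.exists_ncard_lt_of_subset (fun k hk ↦ ⟨⟨k, hCM₀ hk⟩, hC.subset hk, rfl⟩) hN
    _ = P₀ ((fun ω (k : M₀) ↦ T₀ k ω) ⁻¹' S) := by
        rw [← Measure.map_apply hT_M₀ hS, hpivot, Measure.map_apply hT₀_M₀ hS]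
    _ ≤ P₀ {ω | ∃ C : Set ι, IsCluster G {k | T₀ k ω > u} C ∧ N < C.ncard} := by
        refine measure_mono fun ω ⟨C, hC, hN⟩ ↦ ?_
        refine hC.exists_ncard_lt_of_subset (hC.subset.trans ?_) hN
        rintro _ ⟨k, hk, rfl⟩
        exact hk

/-- Strong control of the maximum-cluster-size test under subset pivotality.
Let `(T k)` be the statistics under the true distribution `P`, with `M₀` the
set of voxels where the null is true, and `(T₀ k)` statistics distributed
according to the global null (under `P₀`), with the joint law of `(T k)_{k∈M₀}`
under `P` equal to that of `(T₀ k)_{k∈M₀}` under `P₀` (subset pivotality).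
Then for every threshold `u` and critical size `N`, the probability of
detecting a cluster entirely made of null voxels of size exceeding `N` is
bounded by the global-null probability of some cluster of size exceeding `N`. -/
theorem maxClusterSize_strong_FWER_control
    {Ω Ω₀ : Type*} [MeasurableSpace Ω] [MeasurableSpace Ω₀]
    (P : Measure Ω) [IsProbabilityMeasure P]
    (P₀ : Measure Ω₀) [IsProbabilityMeasure P₀]
    {ι : Type*} [Fintype ι] (G : SimpleGraph ι) (M₀ : Finset ι)
    (T : ι → Ω → ℝ) (T₀ : ι → Ω₀ → ℝ)
    (hT : ∀ k, Measurable (T k)) (hT₀ : ∀ k, Measurable (T₀ k))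
    (hpivot : Measure.map (fun ω (k : M₀) => T k ω) P
      = Measure.map (fun ω (k : M₀) => T₀ k ω) P₀) :
    ∀ (u : ℝ) (N : ℕ),
      P {ω | ∃ C : Set ι, IsCluster G {k | T k ω > u} C ∧ C ⊆ ↑M₀ ∧ N < C.ncard}
        ≤ P₀ {ω | ∃ C : Set ι, IsCluster G {k | T₀ k ω > u} C ∧ N < C.ncard} :=
  maxClusterSize_strong_FWER_control_general P P₀ G M₀ T T₀ hT hT₀ hpivot
end

section
/- Any finite family of pairwise distinct Gaussian probability density functions on ℝ^m is linearly independent: if (μ_1, Σ_1), …, (μ_r, Σ_r) are pairwise distinct parameter pairs (means μ_i ∈ ℝ^m and symmetric positive definite m×m covariance matrices Σ_i, with (μ_i, Σ_i) ≠ (μ_j, Σ_j) for i ≠ j) and c_1, …, c_r ∈ ℝ satisfy Σ_{i=1}^{r} c_i · g_{μ_i,Σ_i}(x) = 0 for all x ∈ ℝ^m, then c_1 = … = c_r = 0. -/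
/-- The Gaussian probability density function on `ℝ^m` with mean `μ` and
covariance matrix `S`:
`g(x) = (2π)^{-m/2} det(S)^{-1/2} exp(-(x-μ)ᵀ S⁻¹ (x-μ) / 2)`. -/
noncomputable def gaussianPDF (m : ℕ) (μ : Fin m → ℝ) (S : Matrix (Fin m) (Fin m) ℝ)
    (x : Fin m → ℝ) : ℝ :=
  (2 * Real.pi) ^ (-(m : ℝ) / 2) * S.det ^ (-(1 : ℝ) / 2) *
    Real.exp (-(dotProduct (x - μ) (S⁻¹.mulVec (x - μ))) / 2)

/-!
Along a line `t ↦ t • v` each density is `g(0) · exp (a t² + b t)`, where `a` and `b` are the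
values at `v` of the quadratic form of `S⁻¹` and of the linear form `S⁻¹ μ`. The pairs
`(S⁻¹, S⁻¹ μ)` are distinct, so for each pair of indices some nonzero polynomial in `v`
vanishes wherever the two coefficient pairs `(a, b)` coincide; a `v` outside these finitely
many zero sets keeps all `(a, b)` distinct. Finally, exponentials of quadratics with distinct
`(a, b)` are linearly independent: ordered lexicographically by `(a, b)`, each one is
negligible against the next as `t → ∞`.
-/

open Filter Asymptotics Matrix MvPolynomial Function

theorem linearIndependent_of_isLittleO {ι β 𝕜 α : Type*} [NormedField 𝕜] [LinearOrder β]
    {l : Filter α} {f : ι → α → 𝕜} (key : ι → β) (hkey : Injective key)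
    (hf : ∀ i j, key i < key j → f i =o[l] f j) (hne : ∀ i, ∃ᶠ x in l, f i x ≠ 0) :
    LinearIndependent 𝕜 f := by
  classical
  refine linearIndependent_iff'.2 fun s ↦ ?_
  induction s using Finset.induction_on_max_value key with
  | empty => simp
  | insert a s has hmax ih =>
    intro g hg
    rw [Finset.sum_insert has] at hg
    have hsmall : (∑ i ∈ s, g i • f i) =o[l] f a := IsLittleO.sum fun i hi ↦
      (hf i a ((hmax i hi).lt_of_ne (hkey.ne (ne_of_mem_of_not_mem hi has)))).const_smul_left _
    have hga : g a = 0 := by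
      by_contra hga
      have hfa : f a = (g a)⁻¹ • -∑ i ∈ s, g i • f i := by
        rw [← eq_neg_of_add_eq_zero_left hg, smul_smul, inv_mul_cancel₀ hga, one_smul]
      refine isLittleO_irrefl (hne a) ?_
      nth_rw 1 [hfa]
      exact hsmall.neg_left.const_smul_left _
    rw [hga, zero_smul, zero_add] at hg
    exact Finset.forall_mem_insert _ _ _ |>.2 ⟨hga, ih g hg⟩

theorem tendsto_quadratic_atTop {a b : ℝ} (h : 0 < toLex (a, b)) :
    Tendsto (fun t : ℝ ↦ a * t ^ 2 + b * t) atTop atTop := by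
  rcases Prod.Lex.lt_iff.1 h with ha | ⟨ha, hb⟩
  · simp only [ofLex_toLex, ofLex_zero, Prod.fst_zero] at ha
    have : Tendsto (fun t : ℝ ↦ t * (a * t + b)) atTop atTop :=
      tendsto_id.atTop_mul_atTop₀ <| tendsto_atTop_add_const_right _ b <|
        tendsto_id.const_mul_atTop ha
    exact this.congr fun t ↦ by ring
  · simp only [ofLex_toLex, ofLex_zero, Prod.fst_zero, Prod.snd_zero] at ha hb
    subst ha
    simpa using tendsto_id.const_mul_atTop hb

theorem isLittleO_exp_quadratic {p q : ℝ × ℝ} (h : toLex p < toLex q) :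
    (fun t ↦ Real.exp (p.1 * t ^ 2 + p.2 * t)) =o[atTop]
      fun t ↦ Real.exp (q.1 * t ^ 2 + q.2 * t) :=
  Real.isLittleO_exp_comp_exp_comp.2 <|
    (tendsto_quadratic_atTop (a := q.1 - p.1) (b := q.2 - p.2) (sub_pos.2 h)).congr fun t ↦ by ring

theorem linearIndependent_exp_quadratic {ι : Type*} {p : ι → ℝ × ℝ} (hp : Injective p) :
    LinearIndependent ℝ fun i (t : ℝ) ↦ Real.exp ((p i).1 * t ^ 2 + (p i).2 * t) :=
  linearIndependent_of_isLittleO (toLex ∘ p) (toLex.injective.comp hp)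
    (fun _ _ h ↦ isLittleO_exp_quadratic h)
    (fun _ ↦ Eventually.frequently <| Eventually.of_forall fun _ ↦ Real.exp_ne_zero _)

theorem Matrix.IsSymm.eq_zero_of_dotProduct_mulVec_self {n : Type*} [Fintype n]
    {B : Matrix n n ℝ} (hB : B.IsSymm) (h : ∀ v, v ⬝ᵥ B *ᵥ v = 0) : B = 0 := by
  classical
  have hpolar (x y : n → ℝ) : x ⬝ᵥ B *ᵥ y = 0 := by
    have hxy := h (x + y)
    have hyx : y ⬝ᵥ B *ᵥ x = x ⬝ᵥ B *ᵥ y := by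
      simpa only [hB.eq] using dotProduct_transpose_mulVec B y x
    rw [mulVec_add, add_dotProduct, dotProduct_add, dotProduct_add, h x, h y, hyx] at hxy
    linarith
  ext k l
  simpa [mulVec_single_one, single_one_dotProduct] using hpolar (Pi.single k 1) (Pi.single l 1)

theorem Matrix.IsSymm.eq_zero_of_dotProduct_mulVec_self_add_dotProduct {n : Type*} [Fintype n]
    {B : Matrix n n ℝ} {u : n → ℝ} (hB : B.IsSymm) (h : ∀ v, v ⬝ᵥ B *ᵥ v + u ⬝ᵥ v = 0) :
    B = 0 ∧ u = 0 := by
  have hquad (v : n → ℝ) : v ⬝ᵥ B *ᵥ v = 0 := by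
    have := h (-v)
    simp only [mulVec_neg, neg_dotProduct, dotProduct_neg, neg_neg] at this
    linarith [h v]
  refine ⟨hB.eq_zero_of_dotProduct_mulVec_self hquad, dotProduct_self_eq_zero.1 ?_⟩
  simpa [hquad] using h u

noncomputable def quadraticMvPolynomial {n R : Type*} [Fintype n] [CommSemiring R]
    (B : Matrix n n R) (u : n → R) : MvPolynomial n R :=
  ∑ k, ∑ l, C (B k l) * X k * X l + ∑ k, C (u k) * X k

theorem eval_quadraticMvPolynomial {n R : Type*} [Fintype n] [CommSemiring R]
    (B : Matrix n n R) (u v : n → R) :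
    eval v (quadraticMvPolynomial B u) = v ⬝ᵥ B *ᵥ v + u ⬝ᵥ v := by
  simp only [quadraticMvPolynomial, map_add, map_sum, map_mul, eval_C, eval_X, dotProduct,
    mulVec, Finset.mul_sum]
  congr 1
  exact Finset.sum_congr rfl fun k _ ↦ Finset.sum_congr rfl fun l _ ↦ by ring

theorem MvPolynomial.exists_forall_eval_ne_zero {ι σ R : Type*} [CommRing R] [IsDomain R]
    [Infinite R] {s : Finset ι} {p : ι → MvPolynomial σ R} (hp : ∀ i ∈ s, p i ≠ 0) :
    ∃ x, ∀ i ∈ s, eval x (p i) ≠ 0 := by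
  have hprod : ∏ i ∈ s, p i ≠ 0 := Finset.prod_ne_zero_iff.2 hp
  by_contra! hzero
  refine hprod (MvPolynomial.funext fun x ↦ ?_)
  obtain ⟨i, hi, hxi⟩ := hzero x
  rw [map_prod, map_zero, Finset.prod_eq_zero hi hxi]

theorem exists_separating_direction {ι n : Type*} [Finite ι] [Fintype n]
    {A : ι → Matrix n n ℝ} {w : ι → n → ℝ} (hA : ∀ i, (A i).IsSymm)
    (hinj : Injective fun i ↦ (A i, w i)) :
    ∃ v, Injective fun i ↦ (v ⬝ᵥ A i *ᵥ v, w i ⬝ᵥ v) := by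
  classical
  have := Fintype.ofFinite ι
  let P (ij : ι × ι) := quadraticMvPolynomial (A ij.1 - A ij.2) (w ij.1 - w ij.2)
  have hP : ∀ ij ∈ (Finset.univ : Finset ι).offDiag, P ij ≠ 0 := by
    rintro ⟨i, j⟩ hij hPij
    obtain ⟨hA0, hw0⟩ := ((hA i).sub (hA j)).eq_zero_of_dotProduct_mulVec_self_add_dotProduct
      (u := w i - w j) fun v ↦ by
        simpa only [P, eval_quadraticMvPolynomial, map_zero] using
          congr_arg (MvPolynomial.eval v) hPij
    exact (Finset.mem_offDiag.1 hij).2.2 <| hinj <| Prod.ext (sub_eq_zero.1 hA0) (sub_eq_zero.1 hw0)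
  obtain ⟨v, hv⟩ := MvPolynomial.exists_forall_eval_ne_zero hP
  refine ⟨v, fun i j hij ↦ by_contra fun hne ↦ hv (i, j) (by simpa using hne) ?_⟩
  obtain ⟨hquad, hlin⟩ := Prod.ext_iff.1 hij
  simp only [P, eval_quadraticMvPolynomial, sub_mulVec, dotProduct_sub, sub_dotProduct]
  simp only at hquad hlin
  rw [hquad, hlin]
  ring

theorem injective_inv_inv_mulVec {ι n K : Type*} [Fintype n] [DecidableEq n] [Field K]
    {μ : ι → n → K} {S : ι → Matrix n n K} (hS : ∀ i, IsUnit (S i).det)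
    (hinj : Injective fun i ↦ (μ i, S i)) : Injective fun i ↦ ((S i)⁻¹, (S i)⁻¹ *ᵥ μ i) := by
  intro i j hij
  obtain ⟨hinv, hmean⟩ := Prod.mk.inj hij
  have hSij : S i = S j := inv_inj hinv (hS i)
  rw [hSij] at hmean
  have hμ := mulVec_injective_of_det_ne_zero (isUnit_nonsing_inv_det _ (hS j)).ne_zero hmean
  exact hinj (Prod.ext hμ hSij)

theorem gaussianPDF_smul {m : ℕ} {μ : Fin m → ℝ} {S : Matrix (Fin m) (Fin m) ℝ}
    (hS : S.IsSymm) (v : Fin m → ℝ) (t : ℝ) :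
    gaussianPDF m μ S (t • v) =
      gaussianPDF m μ S 0 * Real.exp (-(v ⬝ᵥ S⁻¹ *ᵥ v) / 2 * t ^ 2 + (S⁻¹ *ᵥ μ) ⬝ᵥ v * t) := by
  have hcross : μ ⬝ᵥ S⁻¹ *ᵥ v = (S⁻¹ *ᵥ μ) ⬝ᵥ v := by
    rw [dotProduct_comm (S⁻¹ *ᵥ μ)]
    simpa only [hS.inv.eq] using (dotProduct_transpose_mulVec S⁻¹ v μ).symm
  simp only [gaussianPDF, mul_assoc, ← Real.exp_add]
  congr 3
  simp only [zero_sub, sub_dotProduct, mulVec_sub, dotProduct_sub, mulVec_smul, smul_dotProduct,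
    dotProduct_smul, smul_eq_mul, mulVec_neg, neg_dotProduct, dotProduct_neg, neg_neg, hcross,
    dotProduct_comm v (S⁻¹ *ᵥ μ)]
  ring

theorem gaussianPDF_pos {m : ℕ} {μ : Fin m → ℝ} {S : Matrix (Fin m) (Fin m) ℝ} (hS : S.PosDef)
    (x : Fin m → ℝ) : 0 < gaussianPDF m μ S x := by
  have := Real.rpow_pos_of_pos (by positivity : (0 : ℝ) < 2 * Real.pi) (-(m : ℝ) / 2)
  have := Real.rpow_pos_of_pos hS.det_pos (-(1 : ℝ) / 2)
  unfold gaussianPDF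
  positivity

theorem gaussianPDF_linearIndependent_general
    (m r : ℕ) (μ : Fin r → (Fin m → ℝ)) (S : Fin r → Matrix (Fin m) (Fin m) ℝ)
    (hpos : ∀ i, (S i).PosDef)
    (hdist : ∀ i j, i ≠ j → (μ i, S i) ≠ (μ j, S j))
    (c : Fin r → ℝ)
    (hzero : ∀ x : Fin m → ℝ, ∑ i, c i * gaussianPDF m (μ i) (S i) x = 0) :
    ∀ i, c i = 0 := by
  have hsymm i : (S i).IsSymm := isHermitian_iff_isSymm.1 (hpos i).isHermitian
  have hunit i : IsUnit (S i).det := (hpos i).det_pos.ne'.isUnit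
  have hinj := injective_inv_inv_mulVec hunit fun i j h ↦ by_contra (hdist i j · h)
  obtain ⟨v, hv⟩ := exists_separating_direction (fun i ↦ (hsymm i).inv) hinj
  have hli := linearIndependent_exp_quadratic
    (p := fun i ↦ (-(v ⬝ᵥ (S i)⁻¹ *ᵥ v) / 2, ((S i)⁻¹ *ᵥ μ i) ⬝ᵥ v))
    fun i j hij ↦ hv (by simpa using hij)
  intro i
  have hcoef := Fintype.linearIndependent_iff.1 hli (fun i ↦ c i * gaussianPDF m (μ i) (S i) 0)
    (funext fun t ↦ by simpa [gaussianPDF_smul (hsymm _), mul_assoc] using hzero (t • v)) i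
  exact (mul_eq_zero.1 hcoef).resolve_right (gaussianPDF_pos (hpos i) 0).ne'

/-- Any finite family of pairwise distinct Gaussian probability density
functions on `ℝ^m` is linearly independent: if the parameter pairs
`(μ i, S i)` (means and symmetric positive definite covariance matrices)
are pairwise distinct and a real linear combination of the corresponding
densities vanishes identically, then all coefficients vanish. -/
theorem gaussianPDF_linearIndependent
    (m r : ℕ) (μ : Fin r → (Fin m → ℝ)) (S : Fin r → Matrix (Fin m) (Fin m) ℝ)
    (hsymm : ∀ i, (S i).IsSymm) (hpos : ∀ i, (S i).PosDef)
    (hdist : ∀ i j, i ≠ j → (μ i, S i) ≠ (μ j, S j))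
    (c : Fin r → ℝ)
    (hzero : ∀ x : Fin m → ℝ, ∑ i, c i * gaussianPDF m (μ i) (S i) x = 0) :
    ∀ i, c i = 0 :=
  gaussianPDF_linearIndependent_general m r μ S hpos hdist c hzero
end

section
/- If S ⊆ ℝ^m is a Lebesgue-measurable set that is star-shaped about the origin and whose Lebesgue measure is positive and finite, then the function σ ↦ P(σZ ∈ S) is strictly decreasing on (0, ∞): for all 0 < σ < σ′, P(σ′Z ∈ S) < P(σZ ∈ S). -/
/-!
The law of `Z` is the product of standard Gaussians, which charges every set of positive
Lebesgue measure. By star-shapedness `{x | σ' • x ∈ S} ⊆ {x | σ • x ∈ S}`, and the Lebesgue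
measures of these sets are `σ'⁻ᵐ vol S < σ⁻ᵐ vol S`, so their difference has positive Lebesgue,
hence positive Gaussian, measure.
-/

open MeasureTheory ProbabilityTheory Module

theorem MeasureTheory.Measure.AbsolutelyContinuous.pi {n : ℕ} {α : Fin n → Type*}
    [∀ i, MeasurableSpace (α i)] {μ ν : ∀ i, Measure (α i)}
    [∀ i, SigmaFinite (μ i)] [∀ i, SigmaFinite (ν i)] (h : ∀ i, μ i ≪ ν i) :
    Measure.pi μ ≪ Measure.pi ν := by
  induction n with
  | zero => rw [Measure.pi_of_empty, Measure.pi_of_empty]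
  | succ n ih =>
    rw [← ((measurePreserving_piFinSuccAbove μ 0).symm _).map_eq,
      ← ((measurePreserving_piFinSuccAbove ν 0).symm _).map_eq]
    exact ((h 0).prod (ih fun i => h _)).map (MeasurableEquiv.piFinSuccAbove α 0).symm.measurable

theorem MeasureTheory.Measure.AbsolutelyContinuous.measure_lt_measure_of_subset {α : Type*}
    [MeasurableSpace α] {μ ν : Measure α} [IsFiniteMeasure μ] (hνμ : ν ≪ μ) {s t : Set α}
    (hst : s ⊆ t) (hs : MeasurableSet s) (hlt : ν s < ν t) : μ s < μ t := by
  have hν : ν (t \ s) ≠ 0 := by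
    rw [measure_sdiff hst hs.nullMeasurableSet hlt.ne_top]
    exact (tsub_pos_of_lt hlt).ne'
  calc μ s < μ s + μ (t \ s) := ENNReal.lt_add_right (measure_ne_top μ s) (mt (@hνμ _) hν)
    _ = μ t := by rw [measure_add_sdiff hs.nullMeasurableSet, Set.union_eq_self_of_subset_left hst]

theorem ProbabilityTheory.iIndepFun.map_eq_pi_of_forall_map_eq {ι Ω β : Type*} [Fintype ι]
    [MeasurableSpace Ω] [MeasurableSpace β] {P : Measure Ω} {X : Ω → ι → β}
    (hX : ∀ i, Measurable fun ω => X ω i) (hind : iIndepFun (fun i ω => X ω i) P)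
    {μ : Measure β} (hμ : ∀ i, P.map (fun ω => X ω i) = μ) :
    P.map X = Measure.pi fun _ => μ := by
  simpa only [hμ] using hind.map_fun_eq_pi_map fun i => (hX i).aemeasurable

theorem preimage_smul_subset_preimage_smul_of_starShaped {E : Type*} [MulAction ℝ E]
    {S : Set E} (hS : ∀ x ∈ S, ∀ lam : ℝ, lam ∈ Set.Ioo (0 : ℝ) 1 → lam • x ∈ S)
    {r r' : ℝ} (hr : 0 < r) (hrr' : r < r') :
    (r' • ·) ⁻¹' S ⊆ (r • ·) ⁻¹' S := by
  have hr' : 0 < r' := hr.trans hrr'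
  intro x hx
  have := hS _ hx (r / r') ⟨div_pos hr hr', (div_lt_one hr').2 hrr'⟩
  rwa [smul_smul, div_mul_cancel₀ _ hr'.ne'] at this

theorem MeasureTheory.Measure.addHaar_preimage_smul_lt_of_lt {E : Type*} [NormedAddCommGroup E]
    [NormedSpace ℝ E] [MeasurableSpace E] [BorelSpace E] [FiniteDimensional ℝ E]
    (μ : Measure E) [μ.IsAddHaarMeasure] (hE : 0 < finrank ℝ E) {s : Set E}
    (hs₀ : 0 < μ s) (hs : μ s ≠ ⊤) {r r' : ℝ} (hr : 0 < r) (hrr' : r < r') :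
    μ ((r' • ·) ⁻¹' s) < μ ((r • ·) ⁻¹' s) := by
  have hr' : 0 < r' := hr.trans hrr'
  rw [addHaar_preimage_smul μ hr'.ne', addHaar_preimage_smul μ hr.ne',
    abs_of_pos (by positivity), abs_of_pos (by positivity)]
  refine ENNReal.mul_lt_mul_left hs₀.ne' hs ((ENNReal.ofReal_lt_ofReal_iff (by positivity)).2 ?_)
  exact inv_strictAnti₀ (by positivity) (pow_lt_pow_left₀ hrr' hr.le hE.ne')

/-- Let `Z` be a standard Gaussian random vector on `ℝ^m` (i.i.d. standard
normal coordinates, i.e. mean `0` and identity covariance).  If `S ⊆ ℝ^m` is a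
Lebesgue-measurable set, star-shaped about the origin, with positive and
finite Lebesgue measure, then `σ ↦ P(σZ ∈ S)` is strictly decreasing on
`(0, ∞)`. -/
theorem gaussian_prob_starShaped_strictAnti
    {Ω : Type*} [MeasurableSpace Ω] (P : Measure Ω) [IsProbabilityMeasure P]
    (m : ℕ) (hm : 0 < m) (Z : Ω → (Fin m → ℝ))
    (hZmeas : ∀ i, Measurable fun ω => Z ω i)
    (hZdist : ∀ i, Measure.map (fun ω => Z ω i) P = gaussianReal 0 1)
    (hZindep : iIndepFun (fun i ω => Z ω i) P)
    (S : Set (Fin m → ℝ)) (hSmeas : MeasurableSet S)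
    (hstar : ∀ x ∈ S, ∀ lam : ℝ, lam ∈ Set.Ioo (0 : ℝ) 1 → lam • x ∈ S)
    (hpos : 0 < volume S) (hfin : volume S < ⊤) :
    ∀ σ σ' : ℝ, 0 < σ → σ < σ' →
      P {ω | σ' • Z ω ∈ S} < P {ω | σ • Z ω ∈ S} := by
  intro σ σ' hσ hσσ'
  have hZ : Measurable Z := measurable_pi_lambda _ hZmeas
  have hprob (r : ℝ) : P {ω | r • Z ω ∈ S} = P.map Z ((r • ·) ⁻¹' S) :=
    (Measure.map_apply hZ (hSmeas.preimage (measurable_const_smul r))).symm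
  have hvol_ac : (volume : Measure (Fin m → ℝ)) ≪ Measure.pi fun _ => gaussianReal 0 1 :=
    volume_pi (α := fun _ : Fin m => ℝ) ▸
      .pi fun _ => gaussianReal_absolutelyContinuous' 0 one_ne_zero
  rw [hprob, hprob, hZindep.map_eq_pi_of_forall_map_eq hZmeas hZdist]
  exact hvol_ac.measure_lt_measure_of_subset
    (preimage_smul_subset_preimage_smul_of_starShaped hstar hσ hσσ')
    (hSmeas.preimage (measurable_const_smul σ'))
    (Measure.addHaar_preimage_smul_lt_of_lt volume (by simpa using hm) hpos hfin.ne hσ hσσ')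
end
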